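/- Let (H, R) be a finite-dimensional quasitriangular Hopf algebra over a field k, u = Σ Rᵢ S(Rⁱ) its Drinfeld element, and q = u S(u)⁻¹ (the element S(u) is invertible with inverse S(u⁻¹)). Let t be a balanced element of (H, R) and p = u t the corresponding pivotal element. Then t is a ribbon element (i.e., S(t) = t) if and only if p² = q. -/

import Mathlib

open TensorProduct

noncomputable section

variable {k : Type*} [Field k] {H : Type*} [Ring H] [HopfAlgebra k H]

/-- The antipode of `H`. -/
abbrev S : H →ₗ[k] H := HopfAlgebra.antipode (R := k)

/-- `x ⊗ y ↦ x ⊗ y ⊗ 1`. -/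
def iota12 : H ⊗[k] H →ₐ[k] H ⊗[k] (H ⊗[k] H) :=
  Algebra.TensorProduct.map (AlgHom.id k H) Algebra.TensorProduct.includeLeft

/-- `x ⊗ y ↦ x ⊗ 1 ⊗ y`. -/
def iota13 : H ⊗[k] H →ₐ[k] H ⊗[k] (H ⊗[k] H) :=
  Algebra.TensorProduct.map (AlgHom.id k H) Algebra.TensorProduct.includeRight

/-- `x ⊗ y ↦ 1 ⊗ x ⊗ y`. -/
def iota23 : H ⊗[k] H →ₐ[k] H ⊗[k] (H ⊗[k] H) :=
  Algebra.TensorProduct.includeRight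

/-- `R = Σ Rᵢ ⊗ Rⁱ ∈ H ⊗ H` is an R-matrix for `H`. -/
def IsRMatrix (R : H ⊗[k] H) : Prop :=
  (∀ h : H, R * Coalgebra.comul h = (TensorProduct.comm k H H) (Coalgebra.comul h) * R) ∧
  (LinearMap.lTensor H (Coalgebra.comul (R := k)) R = iota13 R * iota12 R) ∧
  ((TensorProduct.assoc k H H H)
      (LinearMap.rTensor H (Coalgebra.comul (R := k)) R) = iota13 R * iota23 R) ∧
  ((TensorProduct.rid k H) (LinearMap.lTensor H (Coalgebra.counit (R := k)) R) = 1 ∧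
    (TensorProduct.lid k H) (LinearMap.rTensor H (Coalgebra.counit (R := k)) R) = 1)

/-- The Drinfeld element `u = Σ Rᵢ S(Rⁱ)`. -/
def drinfeldElement (R : H ⊗[k] H) : H :=
  LinearMap.mul' k H (LinearMap.lTensor H (S (k := k)) R)

/-- The inverse `u⁻¹ = Σ S²(Rᵢ) Rⁱ` of the Drinfeld element. -/
def drinfeldElementInv (R : H ⊗[k] H) : H :=
  LinearMap.mul' k H (LinearMap.rTensor H ((S (k := k)) ∘ₗ (S (k := k))) R)

/-- A balanced element of `(H, R)`: a central element `t` with `ε(t) = 1` and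
`Δ(t) = (t ⊗ t) · (R₂₁ · R)`. -/
def IsBalancedElement (R : H ⊗[k] H) (t : H) : Prop :=
  (∀ h : H, t * h = h * t) ∧
  Coalgebra.counit (R := k) t = 1 ∧
  Coalgebra.comul (R := k) t = (t ⊗ₜ[k] t) * ((TensorProduct.comm k H H) R * R)

/-- The element `q = u S(u)⁻¹`; here `S(u)` is invertible with `S(u)⁻¹ = S(u⁻¹)`, so
`q = u · S(u⁻¹)`. -/
def qElement (R : H ⊗[k] H) : H :=
  drinfeldElement R * S (k := k) (drinfeldElementInv R)

/-!
The map `x ⊗ y ↦ x S(y)` sends `Δ(h)` to `ε(h)` and `R₂₁ R` to `u S(u)`, the latter because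
`h u = u S²(h)`. Applied to `Δ(t) = (t ⊗ t) R₂₁ R` it gives `t u S(u) S(t) = 1`. The right
inverse `Σ S²(Rᵢ) Rⁱ` of `u` is a two-sided inverse since `H` is finite-dimensional, so `u` and
`S(u)` are invertible; as `t` is central, both `S(t) = t` and `(u t)² = u S(u)⁻¹` are then
equivalent to `t² u S(u) = 1`.
-/

open Coalgebra (comul counit Repr)
open HopfAlgebra
open scoped Coalgebra

theorem Coalgebra.sum_counit_smul_left {R A : Type*} [CommSemiring R] [AddCommMonoid A]
    [Module R A] [Coalgebra R A] {a : A} {ι : Type*} (r : Repr R a ι) :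
    ∑ i ∈ r.index, counit (R := R) (r.right i) • r.left i = a := by
  simpa only [map_sum, _root_.TensorProduct.rid_tmul, one_smul] using
    congrArg (_root_.TensorProduct.rid R A) (sum_tmul_counit_eq r)

theorem Units.eq_iff_mul_mul_eq_mul_inv {M : Type*} [Monoid M] {a b : Mˣ} {s t : M}
    (hta : Commute t a) (htb : Commute t b) (h : t * (a * b) * s = 1) :
    s = t ↔ (a * t) * (a * t) = a * ↑b⁻¹ := by
  have htab : Commute t (a * b) := hta.mul_right htb
  have hs : s = t ↔ t * (t * (a * b)) = 1 := by
    constructor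
    · rintro rfl
      rw [htab.eq, ← mul_assoc, h]
    · intro h'
      calc s = t * (t * (a * b)) * s := by rw [h', one_mul]
        _ = t := by rw [mul_assoc, h, mul_one]
  have hsq : (a * t) * (a * t) = a * (a * (t * t)) := by rw [mul_assoc, hta.left_comm]
  have hcomm : a * (t * t) * b = t * (t * (a * b)) := by
    rw [← (hta.mul_left hta).eq]
    simp only [mul_assoc]
  rw [hs, hsq, Units.mul_right_inj, ← Units.mul_eq_one_iff_eq_inv, hcomm]

def antipodeUnit (x : Hˣ) : Hˣ where
  val := S (k := k) x
  inv := S (k := k) ↑x⁻¹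
  val_inv := by rw [← antipode_mul_antidistrib, x.inv_mul, antipode_one]
  inv_val := by rw [← antipode_mul_antidistrib, x.mul_inv, antipode_one]

def mulAntipode : H ⊗[k] H →ₗ[k] H :=
  LinearMap.mul' k H ∘ₗ LinearMap.lTensor H (S (k := k))

@[simp] theorem mulAntipode_tmul (x y : H) : mulAntipode (x ⊗ₜ[k] y) = x * S (k := k) y := rfl

theorem mulAntipode_comul (h : H) :
    mulAntipode (comul (R := k) h) = algebraMap k H (counit h) :=
  mul_antipode_lTensor_comul_apply h

theorem mulAntipode_tmul_mul (x y : H) (Z : H ⊗[k] H) :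
    mulAntipode ((x ⊗ₜ[k] y) * Z) = x * mulAntipode Z * S (k := k) y := by
  induction Z using TensorProduct.induction_on with
  | zero => simp
  | tmul p q => simp [Algebra.TensorProduct.tmul_mul_tmul, antipode_mul_antidistrib, mul_assoc]
  | add Z W hZ hW => simp only [mul_add, map_add, hZ, hW, add_mul]

theorem mulAntipode_mul_comul (Z : H ⊗[k] H) (h : H) :
    mulAntipode (Z * comul (R := k) h) = counit (R := k) h • mulAntipode Z := by
  induction Z using TensorProduct.induction_on with
  | zero => simp
  | tmul x y =>
    rw [mulAntipode_tmul_mul, mulAntipode_comul, mulAntipode_tmul, mul_assoc,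
      ← Algebra.smul_def, mul_smul_comm]
  | add Z W hZ hW => simp only [add_mul, map_add, hZ, hW, smul_add]

def mulAntipodeMul : H ⊗[k] (H ⊗[k] H) →ₗ[k] H :=
  LinearMap.mul' k H ∘ₗ (LinearMap.mul' k H ∘ₗ LinearMap.rTensor H (S (k := k))).lTensor H

@[simp] theorem mulAntipodeMul_tmul (a b c : H) :
    mulAntipodeMul (a ⊗ₜ[k] (b ⊗ₜ[k] c)) = a * (S (k := k) b * c) := rfl

theorem mulAntipodeMul_lTensor_comul (Z : H ⊗[k] H) :
    mulAntipodeMul (LinearMap.lTensor H (comul (R := k)) Z)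
      = TensorProduct.rid k H (LinearMap.lTensor H (counit (R := k)) Z) := by
  induction Z using TensorProduct.induction_on with
  | zero => simp
  | tmul x y =>
    change x * LinearMap.mul' k H (LinearMap.rTensor H (S (k := k)) (comul y)) = _
    rw [mul_antipode_rTensor_comul_apply, ← Algebra.commutes, ← Algebra.smul_def,
      LinearMap.lTensor_tmul, TensorProduct.rid_tmul]
  | add Z W hZ hW => simp only [map_add, hZ, hW]

theorem mulAntipodeMul_iota13_mul_iota12 (Z W : H ⊗[k] H) :
    mulAntipodeMul (iota13 Z * iota12 W)
      = LinearMap.mul' k H (LinearMap.rTensor H (LinearMap.mulRight k (mulAntipode W)) Z) := by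
  induction Z using TensorProduct.induction_on with
  | zero => simp
  | tmul x y =>
    induction W using TensorProduct.induction_on with
    | zero => simp
    | tmul a b => simp [iota13, iota12, Algebra.TensorProduct.tmul_mul_tmul, mul_assoc]
    | add W W' hW hW' => simp [mul_add, add_mul, hW, hW']
  | add Z Z' hZ hZ' => simp only [map_add, add_mul, hZ, hZ']

section RMatrix

variable {R : H ⊗[k] H}

theorem drinfeldElement_eq_mulAntipode : drinfeldElement R = mulAntipode R := rfl

theorem sum_mul_drinfeldElement_mul_antipode (hR : IsRMatrix R) {h : H} {ι : Type*}
    (r : Repr k h ι) :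
    ∑ i ∈ r.index, r.right i * drinfeldElement R * S (k := k) (r.left i)
      = counit (R := k) h • drinfeldElement R := by
  have := congr(mulAntipode $(hR.1 h))
  rw [mulAntipode_mul_comul, ← r.eq, map_sum, Finset.sum_mul, map_sum] at this
  simp only [comm_tmul, mulAntipode_tmul_mul] at this
  rw [← drinfeldElement_eq_mulAntipode] at this
  exact this.symm

theorem mul_drinfeldElement (hR : IsRMatrix R) (h : H) :
    h * drinfeldElement R = drinfeldElement R * S (k := k) (S (k := k) h) := by
  set u := drinfeldElement R
  -- Both `h u` and `u S²(h)` are values of `Φ` on `Δ²(h)`, under its two bracketings.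
  let J : H ⊗[k] H →ₗ[k] H := LinearMap.mul' k H ∘ₗ
    map (LinearMap.mulRight k u) (S (k := k)) ∘ₗ (TensorProduct.comm k H H).toLinearMap
  let Φ : H ⊗[k] (H ⊗[k] H) →ₗ[k] H := LinearMap.mul' k H ∘ₗ
    map J (S (k := k) ∘ₗ S (k := k)) ∘ₗ (TensorProduct.comm k H (H ⊗[k] H)).toLinearMap
  have hΦ (a b c : H) : Φ (a ⊗ₜ (b ⊗ₜ c)) = c * u * S (k := k) (S (k := k) a * b) := by
    simp [Φ, J, antipode_mul_antidistrib, mul_assoc]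
  let r := ℛ k h
  have coassoc := congrArg Φ
    (Coalgebra.sum_tmul_tmul_eq r (fun i ↦ ℛ k (r.left i)) (fun i ↦ ℛ k (r.right i)))
  simp only [map_sum, hΦ] at coassoc
  calc h * u = ∑ i ∈ r.index, counit (R := k) (r.left i) • r.right i * u := by
        rw [← Finset.sum_mul, Coalgebra.sum_counit_smul]
    _ = _ := by
        refine Finset.sum_congr rfl fun i _ ↦ ?_
        rw [← Finset.mul_sum, ← map_sum, sum_antipode_mul_eq_smul, map_smul, antipode_one,
          mul_smul_comm, mul_one, smul_mul_assoc]
    _ = _ := coassoc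
    _ = ∑ i ∈ r.index,
          counit (R := k) (r.right i) • (u * S (k := k) (S (k := k) (r.left i))) := by
        refine Finset.sum_congr rfl fun i _ ↦ ?_
        simp only [antipode_mul_antidistrib, ← mul_assoc, ← Finset.sum_mul]
        rw [sum_mul_drinfeldElement_mul_antipode hR, smul_mul_assoc]
    _ = u * S (k := k) (S (k := k) h) := by
        simp only [← mul_smul_comm, ← Finset.mul_sum, ← map_smul, ← map_sum,
          Coalgebra.sum_counit_smul_left]

theorem drinfeldElement_mul_drinfeldElementInv (hR : IsRMatrix R) :
    drinfeldElement R * drinfeldElementInv R = 1 := by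
  -- `u v = Σ Rᵢ u Rⁱ = Σ Rᵢ Rⱼ S(Rʲ) Rⁱ`, a contraction of `(id ⊗ Δ) R` that equals `(id ⊗ ε) R`.
  have sandwich (Z : H ⊗[k] H) :
      drinfeldElement R * LinearMap.mul' k H (LinearMap.rTensor H (S (k := k) ∘ₗ S (k := k)) Z)
        = LinearMap.mul' k H
            (LinearMap.rTensor H (LinearMap.mulRight k (drinfeldElement R)) Z) := by
    induction Z using TensorProduct.induction_on with
    | zero => simp
    | tmul x y => simp [← mul_assoc, ← mul_drinfeldElement hR]
    | add Z W hZ hW => simp only [map_add, mul_add, hZ, hW]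
  rw [drinfeldElementInv, sandwich, drinfeldElement_eq_mulAntipode,
    ← mulAntipodeMul_iota13_mul_iota12, ← hR.2.1, mulAntipodeMul_lTensor_comul, hR.2.2.2.1]

theorem mulAntipode_comm_mul (hR : IsRMatrix R) (Z : H ⊗[k] H) :
    mulAntipode (TensorProduct.comm k H H Z * R)
      = drinfeldElement R * S (k := k) (mulAntipode Z) := by
  induction Z using TensorProduct.induction_on with
  | zero => simp
  | tmul x y =>
    rw [comm_tmul, mulAntipode_tmul_mul, ← drinfeldElement_eq_mulAntipode, mul_drinfeldElement hR,
      mulAntipode_tmul, antipode_mul_antidistrib, mul_assoc]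
  | add Z W hZ hW => simp only [map_add, add_mul, hZ, hW, mul_add]

theorem IsBalancedElement.mul_drinfeldElement_mul_antipode_eq_one (hR : IsRMatrix R) {t : H}
    (ht : IsBalancedElement R t) :
    t * (drinfeldElement R * S (k := k) (drinfeldElement R)) * S (k := k) t = 1 := by
  have := mulAntipode_comul (k := k) t
  rw [ht.2.1, map_one, ht.2.2, mulAntipode_tmul_mul, mulAntipode_comm_mul hR] at this
  exact this

variable [FiniteDimensional k H]

theorem drinfeldElementInv_mul_drinfeldElement (hR : IsRMatrix R) :
    drinfeldElementInv R * drinfeldElement R = 1 :=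
  have := IsArtinianRing.of_finite k H
  mul_eq_one_symm (drinfeldElement_mul_drinfeldElementInv hR)

def drinfeldUnit (hR : IsRMatrix R) : Hˣ :=
  ⟨drinfeldElement R, drinfeldElementInv R, drinfeldElement_mul_drinfeldElementInv hR,
    drinfeldElementInv_mul_drinfeldElement hR⟩

end RMatrix

/-- Let `(H, R)` be a finite-dimensional quasitriangular Hopf algebra over a field `k`, `u`
its Drinfeld element, `q = u S(u)⁻¹`, `t` a balanced element of `(H, R)` and `p = u t` the
corresponding pivotal element.  Then `t` is a ribbon element (`S(t) = t`) if and only if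
`p² = q`. -/
theorem ribbon_iff_pivotal_sq_eq_q [FiniteDimensional k H]
    (R : H ⊗[k] H) (hR : IsRMatrix R) (t : H) (ht : IsBalancedElement R t) :
    S (k := k) t = t ↔
      (drinfeldElement R * t) * (drinfeldElement R * t) = qElement R :=
  Units.eq_iff_mul_mul_eq_mul_inv (a := drinfeldUnit hR) (b := antipodeUnit (drinfeldUnit hR))
    (ht.1 _) (ht.1 _) (ht.mul_drinfeldElement_mul_antipode_eq_one hR)

end
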